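/- arXiv:1909.11880 — 3 statements merged into one kernel-verified Lean document; each statement's English description precedes it below -/
import Mathlib

section
/- For every n and every i with 0 < i < |Wₙ|, letting α denote the subword of W of length |Wₙ| beginning at position i, one has d₀(Wₙ, α) > 1/6 and d(Wₙ, α) > 2/9. -/
/-!
For `0 < i < |W_{m+1}|` the window of `W` at `i` starts strictly inside an occurrence of
`W_{m+1}`. As `W_{m+1} = Wₘ Wₘ 1 Wₘ`, comparing `W_{m+1}` with this window amounts to comparing
`Wₘ` with the windows `0`, `L` and `2L + 1` places further, where `L = |Wₘ|`. In `W` consecutive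
occurrences of `Wₘ` are separated by at most one spacer `1`, so each of these three windows is
again misaligned at level `m`, or aligned, or shifted by one place against an occurrence of `Wₘ`
next to a spacer, and the last kind occurs unless all three are misaligned. Since the ones of
`Wₘ` are isolated, a shift by one place gives `(3 ^ m + 1) / 2` positions of type `(0, 1)` and
`3 ^ m` mismatches; these counts at most triple from one level to the next, so by induction every
misaligned window at level `m + 1` has at least as many, against `3 ^ (m + 1)` zeros and
`(3 ^ (m + 2) - 1) / 2` letters in `W_{m+1}`.
-/

/-- The Chacón words: `W₀ = 0`, `W_{n+1} = Wₙ Wₙ 1 Wₙ`. -/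
def chaconWord : ℕ → List (Fin 2)
  | 0 => [0]
  | n + 1 => chaconWord n ++ chaconWord n ++ [1] ++ chaconWord n

/-- `W` is the infinite word having every `Wₙ` as an initial segment. -/
def IsChaconInfWord (W : ℕ → Fin 2) : Prop :=
  ∀ n i, i < (chaconWord n).length → W i = (chaconWord n).getD i 0

/-- A finite word `α` occurs in a finite word `β` at position `j`. -/
def OccursAt (α β : List (Fin 2)) (j : ℕ) : Prop :=
  j + α.length ≤ β.length ∧ ∀ k < α.length, β.getD (j + k) 0 = α.getD k 0

/-- A finite word `α` occurs in the infinite word `W` at position `j`. -/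
def OccursAtInf (W : ℕ → Fin 2) (α : List (Fin 2)) (j : ℕ) : Prop :=
  ∀ k < α.length, W (j + k) = α.getD k 0

/-- The subword of the infinite word `W` of length `L` beginning at position `i`. -/
def subword (W : ℕ → Fin 2) (i L : ℕ) : List (Fin 2) :=
  (List.range L).map fun k => W (i + k)

/-- The (normalized) Hamming distance `d` of two finite words. -/
noncomputable def hamming (α β : List (Fin 2)) : ℝ :=
  (((Finset.range α.length).filter fun i => α.getD i 0 ≠ β.getD i 0).card : ℝ) / α.length

/-- The modified 0-Hamming distance `d₀` of two finite words. -/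
noncomputable def hamming0 (α β : List (Fin 2)) : ℝ :=
  (((Finset.range α.length).filter fun i => α.getD i 0 = 0 ∧ β.getD i 0 = 1).card : ℝ) /
    (((Finset.range α.length).filter fun i => α.getD i 0 = 0).card : ℝ)


theorem Nat.count_congr_of_lt {p q : ℕ → Prop} [DecidablePred p] [DecidablePred q] {n : ℕ}
    (h : ∀ k < n, p k ↔ q k) : Nat.count p n = Nat.count q n := by
  simp only [Nat.count_eq_card_filter_range]
  exact congrArg Finset.card (Finset.filter_congr fun k hk => h k (Finset.mem_range.1 hk))

namespace Chacon

variable {R : Fin 2 → Fin 2 → Prop} [DecidableRel R] {x : ℕ → Fin 2} {n m p q g B : ℕ}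

theorem occursAtInf_append {u v : List (Fin 2)} :
    OccursAtInf x (u ++ v) p ↔ OccursAtInf x u p ∧ OccursAtInf x v (p + u.length) := by
  constructor
  · intro h
    refine ⟨fun k hk => ?_, fun k hk => ?_⟩
    · rw [h k (by simp; omega), List.getD_append _ _ _ _ hk]
    · rw [add_assoc, h _ (by simp; omega), List.getD_append_right _ _ _ _ (by omega),
        Nat.add_sub_cancel_left]
  · rintro ⟨hu, hv⟩ k hk
    rcases lt_or_ge k u.length with hk' | hk'
    · rw [hu k hk', List.getD_append _ _ _ _ hk']
    · obtain ⟨j, rfl⟩ := Nat.exists_eq_add_of_le hk'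
      rw [← add_assoc, hv j (by simp at hk; omega), List.getD_append_right _ _ _ _ hk',
        Nat.add_sub_cancel_left]

theorem occursAtInf_singleton {a : Fin 2} : OccursAtInf x [a] p ↔ x p = a := by
  simp [OccursAtInf]

def countRel (R : Fin 2 → Fin 2 → Prop) [DecidableRel R] (u : List (Fin 2)) (x : ℕ → Fin 2)
    (p : ℕ) : ℕ :=
  Nat.count (fun k => R (u.getD k 0) (x (p + k))) u.length

theorem countRel_append (u v : List (Fin 2)) :
    countRel R (u ++ v) x p = countRel R u x p + countRel R v x (p + u.length) := by
  rw [countRel, List.length_append, Nat.count_add]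
  congr 1
  · exact Nat.count_congr_of_lt fun k hk => by rw [List.getD_append _ _ _ _ hk]
  · exact Nat.count_congr_of_lt fun k hk => by
      rw [List.getD_append_right _ _ _ _ (by omega), Nat.add_sub_cancel_left, add_assoc]

theorem countRel_singleton (a : Fin 2) : countRel R [a] x p = if R a (x p) then 1 else 0 := by
  simp [countRel, Nat.count_one]

theorem length_chaconWord_succ (n : ℕ) :
    (chaconWord (n + 1)).length = 3 * (chaconWord n).length + 1 := by
  simp [chaconWord]; ring

theorem two_mul_length_chaconWord_add_one (n : ℕ) :
    2 * (chaconWord n).length + 1 = 3 ^ (n + 1) := by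
  induction n with
  | zero => simp [chaconWord]
  | succ n ih => rw [length_chaconWord_succ, pow_succ, ← ih]; ring

theorem length_chaconWord_pos (n : ℕ) : 0 < (chaconWord n).length := by
  have := two_mul_length_chaconWord_add_one n
  have : 1 < 3 ^ (n + 1) := Nat.one_lt_pow (by omega) (by norm_num)
  omega

theorem count_one_chaconWord_succ (n : ℕ) :
    (chaconWord (n + 1)).count 1 = 3 * (chaconWord n).count 1 + 1 := by
  simp [chaconWord, List.count_append]; ring

theorem two_mul_count_one_chaconWord_add_one (n : ℕ) :
    2 * (chaconWord n).count 1 + 1 = 3 ^ n := by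
  induction n with
  | zero => simp [chaconWord]
  | succ n ih => rw [count_one_chaconWord_succ, pow_succ, ← ih]; ring

theorem occursAtInf_chaconWord_succ :
    OccursAtInf x (chaconWord (n + 1)) p ↔
      OccursAtInf x (chaconWord n) p ∧
        OccursAtInf x (chaconWord n) (p + (chaconWord n).length) ∧
          x (p + 2 * (chaconWord n).length) = 1 ∧
            OccursAtInf x (chaconWord n) (p + 2 * (chaconWord n).length + 1) := by
  simp only [chaconWord, occursAtInf_append, occursAtInf_singleton, List.length_append,
    List.length_singleton, and_assoc, two_mul, add_assoc]

theorem OccursAtInf.chaconWord_first (h : OccursAtInf x (chaconWord n) p) : x p = 0 := by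
  induction n generalizing p with
  | zero => simpa [chaconWord] using h 0
  | succ n ih => exact ih (occursAtInf_chaconWord_succ.1 h).1

theorem OccursAtInf.chaconWord_last (h : OccursAtInf x (chaconWord n) (p + 1)) :
    x (p + (chaconWord n).length) = 0 := by
  induction n generalizing p with
  | zero => simpa [chaconWord] using h 0
  | succ n ih =>
    have := ih (p := p + 2 * (chaconWord n).length + 1)
      (by convert (occursAtInf_chaconWord_succ.1 h).2.2.2 using 1; omega)
    rwa [length_chaconWord_succ, ← add_assoc, show p + 3 * (chaconWord n).length + 1 =
      p + 2 * (chaconWord n).length + 1 + (chaconWord n).length by ring]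

theorem countRel_chaconWord_succ (n : ℕ) :
    countRel R (chaconWord (n + 1)) x p =
      countRel R (chaconWord n) x p + countRel R (chaconWord n) x (p + (chaconWord n).length) +
        (if R 1 (x (p + 2 * (chaconWord n).length)) then 1 else 0) +
          countRel R (chaconWord n) x (p + 2 * (chaconWord n).length + 1) := by
  simp only [chaconWord, countRel_append, countRel_singleton, List.length_append,
    List.length_singleton, two_mul, add_assoc]

theorem countRel_zeros_chaconWord (n : ℕ) :
    countRel (fun a _ => a = 0) (chaconWord n) x p = 3 ^ n := by
  induction n generalizing p with
  | zero => simp [chaconWord, countRel_singleton]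
  | succ n ih => simp [countRel_chaconWord_succ, ih, pow_succ]; ring

/-- Each `1` of `chaconWord n` is isolated and neither first nor last, so comparing
`chaconWord n` with its shift by one place gives `count 1` positions of type `(0, 1)`, as many of
type `(1, 0)`, and the position where the letter `b` is shifted in. -/
def unitShiftBound (R : Fin 2 → Fin 2 → Prop) [DecidableRel R] (n : ℕ) (b : Fin 2) : ℕ :=
  (if R 0 b then 1 else 0) +
    (chaconWord n).count 1 * ((if R 0 1 then 1 else 0) + (if R 1 0 then 1 else 0))

theorem unitShiftBound_succ_le (n : ℕ) (b : Fin 2) :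
    unitShiftBound R (n + 1) b ≤ unitShiftBound R n b + unitShiftBound R n 0 +
      (if R 1 0 then 1 else 0) + unitShiftBound R n 1 := by
  simp only [unitShiftBound, count_one_chaconWord_succ]
  split_ifs <;> omega

theorem unitShiftBound_succ_le_three_mul (hR : R 1 0 → R 0 1) (n : ℕ) :
    unitShiftBound R (n + 1) 1 ≤ 3 * unitShiftBound R n 1 := by
  simp only [unitShiftBound, count_one_chaconWord_succ]
  split_ifs <;> simp_all <;> omega

theorem unitShiftBound_le_countRel_of_occursAtInf_succ
    (h : OccursAtInf x (chaconWord n) (p + 1)) :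
    unitShiftBound R n (x p) ≤ countRel R (chaconWord n) x p := by
  induction n generalizing p with
  | zero => simp [unitShiftBound, countRel_singleton, chaconWord]
  | succ n ih =>
    obtain ⟨h₀, h₁, hs, h₂⟩ := occursAtInf_chaconWord_succ.1 h
    rw [countRel_chaconWord_succ]
    set L := (chaconWord n).length
    have h₁' : OccursAtInf x (chaconWord n) (p + L + 1) := by rwa [add_right_comm]
    have h₂' : OccursAtInf x (chaconWord n) (p + 2 * L + 1 + 1) := by
      convert h₂ using 1; omega
    have e₀ := ih h₀
    have e₁ := ih h₁'
    have e₂ := ih h₂'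
    rw [OccursAtInf.chaconWord_last h₀] at e₁
    rw [show x (p + 2 * L + 1) = 1 by convert hs using 2; ring] at e₂
    rw [show x (p + 2 * L) = 0 by convert OccursAtInf.chaconWord_last h₁' using 2; ring]
    have := unitShiftBound_succ_le (R := R) n (x p)
    omega

theorem unitShiftBound_le_countRel_succ_of_occursAtInf (h : OccursAtInf x (chaconWord n) p) :
    unitShiftBound R n (x (p + (chaconWord n).length)) ≤ countRel R (chaconWord n) x (p + 1) := by
  induction n generalizing p with
  | zero => simp [unitShiftBound, countRel_singleton, chaconWord]
  | succ n ih =>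
    obtain ⟨h₀, h₁, hs, h₂⟩ := occursAtInf_chaconWord_succ.1 h
    rw [countRel_chaconWord_succ, length_chaconWord_succ]
    set L := (chaconWord n).length
    have e₀ := ih h₀
    have e₁ := ih h₁
    have e₂ := ih h₂
    rw [OccursAtInf.chaconWord_first h₁] at e₀
    rw [show x (p + L + L) = 1 by convert hs using 2; ring, add_right_comm] at e₁
    rw [show p + 2 * L + 1 + L = p + (3 * L + 1) by ring,
      show p + 2 * L + 1 + 1 = p + 1 + 2 * L + 1 by ring] at e₂
    rw [show x (p + 1 + 2 * L) = 0 by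
      convert OccursAtInf.chaconWord_first h₂ using 2; ring]
    have := unitShiftBound_succ_le (R := R) n (x (p + (3 * L + 1)))
    omega

/-- The window at `p` runs past the occurrence at `q`, so what follows that occurrence matters:
as everywhere in the Chacón word, it is another occurrence after `g ≤ 1` spacers. -/
def MisalignedBound (R : Fin 2 → Fin 2 → Prop) [DecidableRel R] (n B : ℕ) : Prop :=
  ∀ (x : ℕ → Fin 2) (q g p : ℕ), g ≤ 1 → OccursAtInf x (chaconWord n) q →
    (g = 1 → x (q + (chaconWord n).length) = 1) →
    OccursAtInf x (chaconWord n) (q + (chaconWord n).length + g) →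
    q < p → p < q + (chaconWord n).length → B ≤ countRel R (chaconWord n) x p

theorem misalignedBound_zero (B : ℕ) : MisalignedBound R 0 B := by
  intro x q g p _ _ _ _ hqp hp
  simp [chaconWord] at hp
  omega

theorem MisalignedBound.le_countRel_of_chaconWord_succ (ih : MisalignedBound R m B)
    (hg : g ≤ 1) (hq : OccursAtInf x (chaconWord (m + 1)) q)
    (hgap : g = 1 → x (q + (chaconWord (m + 1)).length) = 1)
    (hnext : OccursAtInf x (chaconWord (m + 1)) (q + (chaconWord (m + 1)).length + g))
    {a : ℕ} (ha : q < a ∧ a < q + 5 * (chaconWord m).length + 1 + g ∧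
      a ≠ q + (chaconWord m).length ∧ a ≠ q + 2 * (chaconWord m).length ∧
      a ≠ q + 2 * (chaconWord m).length + 1 ∧ a ≠ q + 3 * (chaconWord m).length + 1 ∧
      a ≠ q + 3 * (chaconWord m).length + 1 + g ∧ a ≠ q + 4 * (chaconWord m).length + 1 + g) :
    B ≤ countRel R (chaconWord m) x a := by
  obtain ⟨b₀, b₁, s₀, b₂⟩ := occursAtInf_chaconWord_succ.1 hq
  obtain ⟨b₃, b₄, s₁, b₅⟩ := occursAtInf_chaconWord_succ.1 hnext
  rw [length_chaconWord_succ] at hgap b₃ b₄ s₁ b₅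
  set L := (chaconWord m).length
  have hx : ∀ {a b : ℕ}, a = b → x a = x b := fun e => congrArg x e
  have hocc : ∀ {a b : ℕ}, OccursAtInf x (chaconWord m) a → a = b →
      OccursAtInf x (chaconWord m) b := fun h e => e ▸ h
  rcases (by omega : a < q + L ∨ q + L < a ∧ a < q + 2 * L ∨
      q + 2 * L + 1 < a ∧ a < q + 3 * L + 1 ∨
      q + 3 * L + 1 + g < a ∧ a < q + 4 * L + 1 + g ∨ q + 4 * L + 1 + g < a)
    with h | h | h | h | h
  · exact ih x q 0 a (by omega) b₀ (by simp) (hocc b₁ (by omega)) (by omega) h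
  · exact ih x (q + L) 1 a le_rfl b₁ (fun _ => (hx (by omega)).trans s₀)
      (hocc b₂ (by omega)) (by omega) (by omega)
  · exact ih x (q + 2 * L + 1) g a hg b₂ (fun h => (hx (by omega)).trans (hgap h))
      (hocc b₃ (by omega)) (by omega) (by omega)
  · exact ih x _ 0 a (by omega) b₃ (by simp) (hocc b₄ (by omega)) (by omega) (by omega)
  · exact ih x _ 1 a le_rfl b₄ (fun _ => (hx (by omega)).trans s₁)
      (hocc b₅ (by omega)) (by omega) (by omega)

theorem unitShiftBound_le_countRel_of_chaconWord_succ
    (hq : OccursAtInf x (chaconWord (m + 1)) q)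
    (hgap : g = 1 → x (q + (chaconWord (m + 1)).length) = 1)
    (hnext : OccursAtInf x (chaconWord (m + 1)) (q + (chaconWord (m + 1)).length + g))
    {a : ℕ} (ha : a = q + (chaconWord m).length + 1 ∨ a = q + 2 * (chaconWord m).length ∨
      (g = 1 ∧ a = q + 3 * (chaconWord m).length + 1) ∨
      a = q + 4 * (chaconWord m).length + 2 + g ∨ a = q + 5 * (chaconWord m).length + 1 + g) :
    unitShiftBound R m 1 ≤ countRel R (chaconWord m) x a := by
  obtain ⟨-, b₁, s₀, b₂⟩ := occursAtInf_chaconWord_succ.1 hq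
  obtain ⟨b₃, b₄, s₁, b₅⟩ := occursAtInf_chaconWord_succ.1 hnext
  rw [length_chaconWord_succ] at hgap b₃ b₄ s₁ b₅
  have spacer : ∀ a, x a = 1 → OccursAtInf x (chaconWord m) (a + 1) →
      unitShiftBound R m 1 ≤ countRel R (chaconWord m) x a :=
    fun a h₁ hb => h₁ ▸ unitShiftBound_le_countRel_of_occursAtInf_succ hb
  have offset : ∀ a, OccursAtInf x (chaconWord m) a → x (a + (chaconWord m).length) = 1 →
      unitShiftBound R m 1 ≤ countRel R (chaconWord m) x (a + 1) :=
    fun a hb h₁ => h₁ ▸ unitShiftBound_le_countRel_succ_of_occursAtInf hb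
  set L := (chaconWord m).length
  have hx : ∀ {a b : ℕ}, a = b → x a = x b := fun e => congrArg x e
  have hocc : ∀ {a b : ℕ}, OccursAtInf x (chaconWord m) a → a = b →
      OccursAtInf x (chaconWord m) b := fun h e => e ▸ h
  rcases ha with rfl | rfl | ⟨rfl, rfl⟩ | rfl | rfl
  · exact offset _ b₁ ((hx (by omega)).trans s₀)
  · exact spacer _ s₀ b₂
  · exact spacer _ (hgap rfl) (hocc b₃ (by omega))
  · convert offset _ b₄ ((hx (by omega)).trans s₁) using 2; omega
  · exact spacer _ ((hx (by omega)).trans s₁) (hocc b₅ (by omega))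

/-- The window at `p` splits into windows of `chaconWord m` at `p`, `p + L` and `p + 2L + 1`.
Each starts strictly inside an occurrence of `chaconWord m` (bound `B`), or is aligned with one
(bound `0`), or is shifted by one place against one next to a spacer (bound
`unitShiftBound R m 1`); unless all three are of the first kind, one is of the last kind. -/
theorem MisalignedBound.succ (ih : MisalignedBound R m B) (hB : unitShiftBound R m 1 ≤ 3 * B) :
    MisalignedBound R (m + 1) (unitShiftBound R m 1) := by
  intro x q g p hg hq hgap hnext hqp hpL
  have inner := fun a => ih.le_countRel_of_chaconWord_succ hg hq hgap hnext (a := a)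
  have shifted := fun a =>
    unitShiftBound_le_countRel_of_chaconWord_succ (R := R) hq hgap hnext (a := a)
  rw [countRel_chaconWord_succ]
  rw [length_chaconWord_succ] at hpL
  set L := (chaconWord m).length
  rcases (by omega : p < q + L ∨ p = q + L ∨ p = q + L + 1 ∨
      (q + L + 1 < p ∧ p < q + 2 * L) ∨ p = q + 2 * L ∨ p = q + 2 * L + 1 ∨
      q + 2 * L + 1 < p)
    with h | h | h | h | h | h | h
  · have := inner p (by omega)
    have := inner (p + L) (by omega)
    have := inner (p + 2 * L + 1) (by omega)
    omega
  · have := shifted (p + L) (by omega)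
    omega
  · have := shifted p (by omega)
    omega
  · have := inner p (by omega)
    have := inner (p + L) (by omega)
    have := inner (p + 2 * L + 1) (by omega)
    omega
  · have := shifted p (by omega)
    omega
  · rcases (by omega : g = 0 ∨ g = 1) with rfl | rfl
    · have := shifted (p + 2 * L + 1) (by omega)
      omega
    · have := shifted (p + L) (by omega)
      omega
  · have := inner p (by omega)
    by_cases hg₁ : g = 1 ∧ p = q + 2 * L + 2
    · have := shifted (p + 2 * L + 1) (by omega)
      omega
    have := inner (p + L) (by omega)
    by_cases hg₀ : g = 0 ∧ p = q + 3 * L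
    · have := shifted (p + 2 * L + 1) (by omega)
      omega
    have := inner (p + 2 * L + 1) (by omega)
    omega

theorem misalignedBound (hR : R 1 0 → R 0 1) :
    ∀ m, MisalignedBound R (m + 1) (unitShiftBound R m 1)
  | 0 => (misalignedBound_zero (unitShiftBound R 0 1)).succ (by omega)
  | m + 1 => (misalignedBound hR m).succ (unitShiftBound_succ_le_three_mul hR m)

theorem occursAtInf_of_isChaconInfWord {W : ℕ → Fin 2} (hW : IsChaconInfWord W) (n : ℕ) :
    OccursAtInf W (chaconWord n) 0 :=
  fun k hk => by rw [zero_add, hW n k hk]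

theorem unitShiftBound_le_countRel_of_isChaconInfWord {W : ℕ → Fin 2} (hW : IsChaconInfWord W)
    (hR : R 1 0 → R 0 1) {i : ℕ} (hi0 : 0 < i) (hin : i < (chaconWord (m + 1)).length) :
    unitShiftBound R m 1 ≤ countRel R (chaconWord (m + 1)) W i := by
  obtain ⟨h₀, h₁, -, -⟩ :=
    occursAtInf_chaconWord_succ.1 (occursAtInf_of_isChaconInfWord hW (m + 2))
  exact misalignedBound hR m W 0 0 i (by norm_num) h₀ (by simp) (by simpa using h₁) hi0
    (by omega)

theorem subword_getD {L k : ℕ} (hk : k < L) : (subword x p L).getD k 0 = x (p + k) := by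
  simp [subword, hk]

theorem hamming_subword (u : List (Fin 2)) :
    hamming u (subword x p u.length) = countRel (· ≠ ·) u x p / u.length := by
  rw [hamming, ← Nat.count_eq_card_filter_range]
  congr 2
  exact Nat.count_congr_of_lt fun k hk => by rw [subword_getD hk]

theorem hamming0_chaconWord_subword (n : ℕ) :
    hamming0 (chaconWord n) (subword x p (chaconWord n).length) =
      countRel (fun a b => a = 0 ∧ b = 1) (chaconWord n) x p / 3 ^ n := by
  have hzeros : Nat.count (fun k => (chaconWord n).getD k 0 = 0) (chaconWord n).length = 3 ^ n :=
    countRel_zeros_chaconWord (x := x) (p := p) n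
  rw [hamming0, ← Nat.count_eq_card_filter_range, ← Nat.count_eq_card_filter_range, hzeros]
  push_cast
  congr 2
  exact Nat.count_congr_of_lt fun k hk => by rw [subword_getD hk]

end Chacon

open Chacon in
theorem chacon_shift_lower_bound (W : ℕ → Fin 2) (hW : IsChaconInfWord W) (n i : ℕ)
    (hi0 : 0 < i) (hin : i < (chaconWord n).length) :
    hamming0 (chaconWord n) (subword W i (chaconWord n).length) > 1 / 6 ∧
      hamming (chaconWord n) (subword W i (chaconWord n).length) > 2 / 9 := by
  obtain _ | m := n
  · simp [chaconWord] at hin; omega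
  have hE := unitShiftBound_le_countRel_of_isChaconInfWord (R := fun a b => a = 0 ∧ b = 1) hW
    (by decide) hi0 hin
  have hD := unitShiftBound_le_countRel_of_isChaconInfWord (R := (· ≠ ·)) hW (by decide) hi0 hin
  norm_num [unitShiftBound] at hE hD
  have h₁ := two_mul_count_one_chaconWord_add_one m
  have h₂ := two_mul_length_chaconWord_add_one (m + 1)
  rw [pow_succ, pow_succ] at h₂
  rw [hamming0_chaconWord_subword, hamming_subword, gt_iff_lt, gt_iff_lt,
    div_lt_div_iff₀ (by norm_num) (by positivity),
    div_lt_div_iff₀ (by norm_num) (by exact_mod_cast length_chaconWord_pos _)]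
  constructor
  · norm_cast; rw [pow_succ]; omega
  · norm_cast; omega
end

section
/- Fix n and i with 0 < i < |Wₙ|. Let β₁ be the word consisting of the suffix of Wₙ of length |Wₙ| − i followed by the prefix of Wₙ of length i, and let β₂ be the word consisting of the suffix of Wₙ of length |Wₙ| − i, then the letter 1, then the prefix of Wₙ of length i − 1. Then for every k ≥ 0, letting α_{n+k} denote the subword of W of length |W_{n+k}| beginning at position i, one has d₀(W_{n+k}, α_{n+k}) ≥ min{ d₀(Wₙ, β₁), d₀(Wₙ, β₂) }. -/
open Filter

namespace ChaconAux

lemma chacon_succ (n : ℕ) :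
    chaconWord (n+1) = chaconWord n ++ chaconWord n ++ [1] ++ chaconWord n := rfl

lemma len_succ (n : ℕ) :
    (chaconWord (n+1)).length = 3 * (chaconWord n).length + 1 := by
  simp [chacon_succ]; ring

lemma len_pos (n : ℕ) : 0 < (chaconWord n).length := by
  induction n with
  | zero => simp [chaconWord]
  | succ n ih => rw [len_succ]; omega

lemma len_mono {n m : ℕ} (h : n ≤ m) : (chaconWord n).length ≤ (chaconWord m).length := by
  induction m with
  | zero => simp_all
  | succ m ih =>
    rcases Nat.lt_or_ge n (m+1) with h' | h'
    · have := ih (by omega); rw [len_succ]; omega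
    · have : n = m + 1 := by omega
      subst this; rfl

lemma getD1 (n j : ℕ) (h : j < (chaconWord n).length) :
    (chaconWord (n+1)).getD j 0 = (chaconWord n).getD j 0 := by
  rw [chacon_succ]
  rw [List.getD_append _ _ _ _ (by simp; omega)]
  rw [List.getD_append _ _ _ _ (by simp; omega)]
  rw [List.getD_append _ _ _ _ (by simpa)]

lemma getD2 (n j : ℕ) (h : j < (chaconWord n).length) :
    (chaconWord (n+1)).getD ((chaconWord n).length + j) 0 = (chaconWord n).getD j 0 := by
  rw [chacon_succ]
  rw [List.getD_append _ _ _ _ (by simp; omega)]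
  rw [List.getD_append _ _ _ _ (by simp; omega)]
  rw [List.getD_append_right _ _ _ _ (by omega)]
  congr 1; omega

lemma getD3 (n : ℕ) :
    (chaconWord (n+1)).getD (2 * (chaconWord n).length) 0 = 1 := by
  rw [chacon_succ]
  rw [List.getD_append _ _ _ _ (by simp; omega)]
  rw [List.getD_append_right _ _ _ _ (by simp; omega)]
  rw [show 2 * (chaconWord n).length - (chaconWord n ++ chaconWord n).length = 0 by
    simp; omega]
  rfl

lemma getD4 (n j : ℕ) (h : j < (chaconWord n).length) :
    (chaconWord (n+1)).getD (2 * (chaconWord n).length + 1 + j) 0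
      = (chaconWord n).getD j 0 := by
  rw [chacon_succ]
  rw [List.getD_append_right _ _ _ _ (by simp; omega)]
  congr 1; simp; omega

lemma getD_prefix {n m : ℕ} (h : n ≤ m) {j : ℕ} (hj : j < (chaconWord n).length) :
    (chaconWord m).getD j 0 = (chaconWord n).getD j 0 := by
  induction m with
  | zero => have : n = 0 := by omega
            subst this; rfl
  | succ m ih =>
    rcases Nat.lt_or_ge n (m+1) with h' | h'
    · have hn : n ≤ m := by omega
      rw [getD1 m j (lt_of_lt_of_le hj (len_mono hn)), ih hn]
    · have : n = m + 1 := by omega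
      subst this; rfl

/-- number of zeros of `Wₙ`. -/
def Zc (n : ℕ) : ℕ :=
  ((Finset.range (chaconWord n).length).filter fun j => (chaconWord n).getD j 0 = 0).card

/-- number of mismatched zeros between `Wₙ` and `W` shifted to `p`. -/
def Nc (W : ℕ → Fin 2) (n p : ℕ) : ℕ :=
  ((Finset.range (chaconWord n).length).filter
    fun j => (chaconWord n).getD j 0 = 0 ∧ W (p + j) = 1).card

lemma card_filter_range_add (P : ℕ → Prop) [DecidablePred P] (a b : ℕ) :
    ((Finset.range (a+b)).filter P).card =
      ((Finset.range a).filter P).card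
        + ((Finset.range b).filter fun j => P (a+j)).card := by
  classical
  rw [Finset.card_filter, Finset.card_filter, Finset.card_filter, Finset.sum_range_add]

lemma Zc_succ (n : ℕ) : Zc (n+1) = 3 * Zc n := by
  classical
  have h1 : (chaconWord (n+1)).length = (chaconWord n).length + ((chaconWord n).length + (1 + (chaconWord n).length)) := by rw [len_succ]; omega
  unfold Zc
  rw [h1, card_filter_range_add, card_filter_range_add, card_filter_range_add]
  have e1 : ((Finset.range (chaconWord n).length).filter fun j => (chaconWord (n+1)).getD j 0 = 0).card
      = Zc n := by
    unfold Zc; congr 1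
    apply Finset.filter_congr
    intro j hj
    rw [Finset.mem_range] at hj
    rw [getD1 n j hj]
  have e2 : ((Finset.range (chaconWord n).length).filter fun j => (chaconWord (n+1)).getD ((chaconWord n).length + j) 0 = 0).card
      = Zc n := by
    unfold Zc; congr 1
    apply Finset.filter_congr
    intro j hj
    rw [Finset.mem_range] at hj
    rw [getD2 n j hj]
  have e3 : ((Finset.range 1).filter fun j => (chaconWord (n+1)).getD ((chaconWord n).length + ((chaconWord n).length + j)) 0 = 0).card
      = 0 := by
    rw [Finset.card_eq_zero, Finset.filter_eq_empty_iff]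
    intro j hj
    rw [Finset.mem_range] at hj
    have : j = 0 := by omega
    subst this
    rw [show (chaconWord n).length + ((chaconWord n).length + 0) = 2 * (chaconWord n).length by omega, getD3 n]
    simp
  have e4 : ((Finset.range (chaconWord n).length).filter
      fun j => (chaconWord (n+1)).getD ((chaconWord n).length + ((chaconWord n).length + (1 + j))) 0 = 0).card = Zc n := by
    unfold Zc; congr 1
    apply Finset.filter_congr
    intro j hj
    rw [Finset.mem_range] at hj
    rw [show (chaconWord n).length + ((chaconWord n).length + (1 + j)) = 2 * (chaconWord n).length + 1 + j by omega, getD4 n j hj]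
  rw [e1, e2, e3, e4]
  unfold Zc
  omega

lemma Nc_succ (W : ℕ → Fin 2) (n p : ℕ) :
    Nc W (n+1) p = Nc W n p + Nc W n (p + (chaconWord n).length)
      + Nc W n (p + 2 * (chaconWord n).length + 1) := by
  classical
  have h1 : (chaconWord (n+1)).length = (chaconWord n).length + ((chaconWord n).length + (1 + (chaconWord n).length)) := by rw [len_succ]; omega
  unfold Nc
  rw [h1, card_filter_range_add, card_filter_range_add, card_filter_range_add]
  have e1 : ((Finset.range (chaconWord n).length).filter
      fun j => (chaconWord (n+1)).getD j 0 = 0 ∧ W (p + j) = 1).card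
      = ((Finset.range (chaconWord n).length).filter
      fun j => (chaconWord n).getD j 0 = 0 ∧ W (p + j) = 1).card := by
    congr 1
    apply Finset.filter_congr
    intro j hj
    rw [Finset.mem_range] at hj
    rw [getD1 n j hj]
  have e2 : ((Finset.range (chaconWord n).length).filter
      fun j => (chaconWord (n+1)).getD ((chaconWord n).length + j) 0 = 0 ∧ W (p + ((chaconWord n).length + j)) = 1).card
      = ((Finset.range (chaconWord n).length).filter
      fun j => (chaconWord n).getD j 0 = 0 ∧ W (p + (chaconWord n).length + j) = 1).card := by
    congr 1
    apply Finset.filter_congr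
    intro j hj
    rw [Finset.mem_range] at hj
    rw [getD2 n j hj, show p + ((chaconWord n).length + j) = p + (chaconWord n).length + j by omega]
  have e3 : ((Finset.range 1).filter
      fun j => (chaconWord (n+1)).getD ((chaconWord n).length + ((chaconWord n).length + j)) 0 = 0 ∧ W (p + ((chaconWord n).length + ((chaconWord n).length + j))) = 1).card
      = 0 := by
    rw [Finset.card_eq_zero, Finset.filter_eq_empty_iff]
    intro j hj
    rw [Finset.mem_range] at hj
    have : j = 0 := by omega
    subst this
    rw [show (chaconWord n).length + ((chaconWord n).length + 0) = 2 * (chaconWord n).length by omega, getD3 n]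
    simp
  have e4 : ((Finset.range (chaconWord n).length).filter
      fun j => (chaconWord (n+1)).getD ((chaconWord n).length + ((chaconWord n).length + (1 + j))) 0 = 0
        ∧ W (p + ((chaconWord n).length + ((chaconWord n).length + (1 + j)))) = 1).card
      = ((Finset.range (chaconWord n).length).filter
      fun j => (chaconWord n).getD j 0 = 0 ∧ W (p + 2 * (chaconWord n).length + 1 + j) = 1).card := by
    congr 1
    apply Finset.filter_congr
    intro j hj
    rw [Finset.mem_range] at hj
    rw [show (chaconWord n).length + ((chaconWord n).length + (1 + j)) = 2 * (chaconWord n).length + 1 + j by omega, getD4 n j hj,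
      show p + (2 * (chaconWord n).length + 1 + j) = p + 2 * (chaconWord n).length + 1 + j by omega]
  rw [e1, e2, e3, e4]
  omega

lemma Zc_pos (n : ℕ) : 0 < Zc n := by
  apply Finset.card_pos.mpr
  refine ⟨0, ?_⟩
  rw [Finset.mem_filter, Finset.mem_range]
  refine ⟨len_pos n, ?_⟩
  rw [getD_prefix (Nat.zero_le n) (by simp [chaconWord])]
  rfl

def GoodBlock (W : ℕ → Fin 2) (n i m p : ℕ) : Prop :=
  (∀ j < (chaconWord m).length, W (p + j) = (chaconWord m).getD j 0) ∧
  ((∀ j < i, W (p + (chaconWord m).length + j) = (chaconWord n).getD j 0) ∨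
   (W (p + (chaconWord m).length) = 1 ∧
    ∀ j < i - 1, W (p + (chaconWord m).length + 1 + j) = (chaconWord n).getD j 0))

lemma good_step (W : ℕ → Fin 2) (n i m p : ℕ) (hi : i ≤ (chaconWord n).length)
    (hnm : n ≤ m) (h : GoodBlock W n i (m+1) p) :
    GoodBlock W n i m p ∧ GoodBlock W n i m (p + (chaconWord m).length) ∧
      GoodBlock W n i m (p + 2 * (chaconWord m).length + 1) := by
  obtain ⟨h1, h2⟩ := h
  have hL : (chaconWord (m+1)).length = 3 * (chaconWord m).length + 1 := len_succ m
  have hil : i ≤ (chaconWord m).length := le_trans hi (len_mono hnm)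
  refine ⟨⟨?_, ?_⟩, ⟨?_, ?_⟩, ⟨?_, ?_⟩⟩
  · intro j hj
    rw [h1 j (by omega), getD1 m j hj]
  · left
    intro j hj
    have hj' : j < (chaconWord m).length := by omega
    rw [show p + (chaconWord m).length + j = p + ((chaconWord m).length + j) by omega,
      h1 ((chaconWord m).length + j) (by omega), getD2 m j hj',
      getD_prefix hnm (by omega)]
  · intro j hj
    rw [show p + (chaconWord m).length + j = p + ((chaconWord m).length + j) by omega,
      h1 ((chaconWord m).length + j) (by omega), getD2 m j hj]
  · right
    constructor
    · rw [show p + (chaconWord m).length + (chaconWord m).length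
          = p + 2 * (chaconWord m).length by omega,
        h1 (2 * (chaconWord m).length) (by omega), getD3 m]
    · intro j hj
      have hj' : j < (chaconWord m).length := by omega
      rw [show p + (chaconWord m).length + (chaconWord m).length + 1 + j
          = p + (2 * (chaconWord m).length + 1 + j) by omega,
        h1 (2 * (chaconWord m).length + 1 + j) (by omega), getD4 m j hj',
        getD_prefix hnm (by omega)]
  · intro j hj
    rw [show p + 2 * (chaconWord m).length + 1 + j
        = p + (2 * (chaconWord m).length + 1 + j) by omega,
      h1 (2 * (chaconWord m).length + 1 + j) (by omega), getD4 m j hj]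
  · rcases h2 with h2 | h2
    · left
      intro j hj
      rw [show p + 2 * (chaconWord m).length + 1 + (chaconWord m).length + j
          = p + (chaconWord (m+1)).length + j by omega]
      exact h2 j hj
    · right
      refine ⟨?_, ?_⟩
      · rw [show p + 2 * (chaconWord m).length + 1 + (chaconWord m).length
            = p + (chaconWord (m+1)).length by omega]
        exact h2.1
      · intro j hj
        rw [show p + 2 * (chaconWord m).length + 1 + (chaconWord m).length + 1 + j
            = p + (chaconWord (m+1)).length + 1 + j by omega]
        exact h2.2 j hj

lemma getD_drop (A : List (Fin 2)) (i j : ℕ) (h : i + j < A.length) :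
    (A.drop i).getD j 0 = A.getD (i + j) 0 := by
  rw [List.getD_eq_getElem _ _ (by simp; omega), List.getD_eq_getElem _ _ h,
    List.getElem_drop]

lemma getD_take (A : List (Fin 2)) (i t : ℕ) (ht : t < i) (hi : i ≤ A.length) :
    (A.take i).getD t 0 = A.getD t 0 := by
  rw [List.getD_eq_getElem _ _ (by simp; omega), List.getD_eq_getElem _ _ (by omega),
    List.getElem_take]

lemma base_case (W : ℕ → Fin 2) (n i p : ℕ) (hi0 : 0 < i)
    (hi : i < (chaconWord n).length) (h : GoodBlock W n i n p) :
    (∀ j < (chaconWord n).length, W (p + i + j)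
        = ((chaconWord n).drop i ++ (chaconWord n).take i).getD j 0) ∨
    (∀ j < (chaconWord n).length, W (p + i + j)
        = ((chaconWord n).drop i ++ [1] ++ (chaconWord n).take (i-1)).getD j 0) := by
  obtain ⟨h1, h2⟩ := h
  rcases h2 with h2 | h2
  · left
    intro j hj
    by_cases hj1 : j < (chaconWord n).length - i
    · rw [List.getD_append _ _ _ _ (by simp; omega), getD_drop _ _ _ (by omega),
        show p + i + j = p + (i + j) by omega, h1 (i + j) (by omega)]
    · rw [List.getD_append_right _ _ _ _ (by simp; omega)]
      simp only [List.length_drop]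
      rw [getD_take _ _ _ (by omega) (by omega),
        show p + i + j = p + (chaconWord n).length + (j - ((chaconWord n).length - i)) by omega,
        h2 (j - ((chaconWord n).length - i)) (by omega)]
  · right
    intro j hj
    by_cases hj1 : j < (chaconWord n).length - i
    · rw [List.getD_append _ _ _ _ (by simp; omega), List.getD_append _ _ _ _ (by simp; omega),
        getD_drop _ _ _ (by omega),
        show p + i + j = p + (i + j) by omega, h1 (i + j) (by omega)]
    · by_cases hj2 : j = (chaconWord n).length - i
      · rw [List.getD_append _ _ _ _ (by simp; omega),
          List.getD_append_right _ _ _ _ (by simp; omega)]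
        simp only [List.length_drop]
        rw [show j - ((chaconWord n).length - i) = 0 by omega,
          show p + i + j = p + (chaconWord n).length by omega]
        exact h2.1
      · rw [List.getD_append_right _ _ _ _ (by simp; omega)]
        simp only [List.length_append, List.length_drop, List.length_cons, List.length_nil]
        rw [getD_take _ _ _ (by omega) (by omega),
          show p + i + j
            = p + (chaconWord n).length + 1 + (j - ((chaconWord n).length - i + 1)) by omega]
        rw [h2.2 (j - ((chaconWord n).length - i + 1)) (by omega)]

lemma Nc_eq (W : ℕ → Fin 2) (n p : ℕ) (β : List (Fin 2))
    (h : ∀ j < (chaconWord n).length, W (p + j) = β.getD j 0) :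
    Nc W n p = ((Finset.range (chaconWord n).length).filter
      fun j => (chaconWord n).getD j 0 = 0 ∧ β.getD j 0 = 1).card := by
  unfold Nc
  congr 1
  apply Finset.filter_congr
  intro j hj
  rw [Finset.mem_range] at hj
  rw [h j hj]

lemma hamming0_eq (n : ℕ) (β : List (Fin 2)) :
    hamming0 (chaconWord n) β
      = (((Finset.range (chaconWord n).length).filter
          fun j => (chaconWord n).getD j 0 = 0 ∧ β.getD j 0 = 1).card : ℝ) / (Zc n : ℝ) := rfl

lemma main_bound (W : ℕ → Fin 2) (n i : ℕ) (hi0 : 0 < i)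
    (hi : i < (chaconWord n).length) (k : ℕ) :
    ∀ p, GoodBlock W n i (n+k) p →
      (min (hamming0 (chaconWord n) ((chaconWord n).drop i ++ (chaconWord n).take i))
        (hamming0 (chaconWord n) ((chaconWord n).drop i ++ [1] ++ (chaconWord n).take (i-1))))
        * (Zc (n+k) : ℝ) ≤ (Nc W (n+k) (p + i) : ℝ) := by
  induction k with
  | zero =>
    intro p hp
    simp only [Nat.add_zero]
    have hZ : (0 : ℝ) < (Zc n : ℝ) := by exact_mod_cast Zc_pos n
    rcases base_case W n i p hi0 hi hp with hb | hb
    · have he := Nc_eq W n (p + i) _ (fun j hj => hb j hj)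
      rw [he]
      calc _ ≤ hamming0 (chaconWord n)
              ((chaconWord n).drop i ++ (chaconWord n).take i) * (Zc n : ℝ) :=
            mul_le_mul_of_nonneg_right (min_le_left _ _) (le_of_lt hZ)
        _ = _ := by rw [hamming0_eq]; exact div_mul_cancel₀ _ (ne_of_gt hZ)
    · have he := Nc_eq W n (p + i) _ (fun j hj => hb j hj)
      rw [he]
      calc _ ≤ hamming0 (chaconWord n)
              ((chaconWord n).drop i ++ [1] ++ (chaconWord n).take (i-1)) * (Zc n : ℝ) :=
            mul_le_mul_of_nonneg_right (min_le_right _ _) (le_of_lt hZ)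
        _ = _ := by rw [hamming0_eq]; exact div_mul_cancel₀ _ (ne_of_gt hZ)
  | succ k ih =>
    intro p hp
    obtain ⟨g1, g2, g3⟩ := good_step W n i (n+k) p (le_of_lt hi) (Nat.le_add_right n k) hp
    have b1 := ih p g1
    have b2 := ih (p + (chaconWord (n+k)).length) g2
    have b3 := ih (p + 2 * (chaconWord (n+k)).length + 1) g3
    have hsplit := Nc_succ W (n+k) (p+i)
    rw [show p + i + (chaconWord (n+k)).length = p + (chaconWord (n+k)).length + i by omega,
      show p + i + 2 * (chaconWord (n+k)).length + 1
        = p + 2 * (chaconWord (n+k)).length + 1 + i by omega] at hsplit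
    rw [show n + (k+1) = (n+k)+1 from rfl, hsplit, Zc_succ]
    push_cast
    linarith

lemma subword_getD (W : ℕ → Fin 2) (i L j : ℕ) (h : j < L) :
    (subword W i L).getD j 0 = W (i + j) := by
  rw [List.getD_eq_getElem _ _ (by simp [subword]; omega)]
  simp [subword]

end ChaconAux

open ChaconAux

theorem chacon_two_beta_min (W : ℕ → Fin 2) (hW : IsChaconInfWord W) (n i : ℕ)
    (hi0 : 0 < i) (hin : i < (chaconWord n).length) (k : ℕ) :
    hamming0 (chaconWord (n + k)) (subword W i (chaconWord (n + k)).length) ≥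
      min (hamming0 (chaconWord n) ((chaconWord n).drop i ++ (chaconWord n).take i))
        (hamming0 (chaconWord n)
          ((chaconWord n).drop i ++ [1] ++ (chaconWord n).take (i - 1))) := by
  have hgood : GoodBlock W n i (n+k) 0 := by
    constructor
    · intro j hj
      rw [zero_add]
      exact hW (n+k) j hj
    · left
      intro j hj
      have hil : i ≤ (chaconWord (n+k)).length :=
        le_trans (le_of_lt hin) (len_mono (Nat.le_add_right n k))
      have hlen : (chaconWord (n+k)).length + j < (chaconWord (n+k+1)).length := by
        rw [len_succ]; omega
      rw [zero_add, hW (n+k+1) _ hlen, getD2 (n+k) j (by omega),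
        getD_prefix (Nat.le_add_right n k) (by omega)]
  have hb := main_bound W n i hi0 hin k 0 hgood
  rw [zero_add] at hb
  have hfil : ((Finset.range (chaconWord (n+k)).length).filter
        fun j => (chaconWord (n+k)).getD j 0 = 0
          ∧ (subword W i (chaconWord (n+k)).length).getD j 0 = 1)
      = ((Finset.range (chaconWord (n+k)).length).filter
        fun j => (chaconWord (n+k)).getD j 0 = 0 ∧ W (i + j) = 1) := by
    apply Finset.filter_congr
    intro j hj
    rw [Finset.mem_range] at hj
    rw [subword_getD W i _ j hj]
  have hH : hamming0 (chaconWord (n+k)) (subword W i (chaconWord (n+k)).length)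
      = (Nc W (n+k) i : ℝ) / (Zc (n+k) : ℝ) := by
    rw [hamming0_eq, hfil]
    rfl
  rw [ge_iff_le, hH, le_div_iff₀ (by exact_mod_cast Zc_pos (n+k))]
  exact hb
end

section
/- Let n > 0 and set i = 2·|W_{n−1}| + 1 = 3ⁿ. Then for every k ≥ 0, letting α_{n+k} denote the subword of W of length |W_{n+k}| beginning at position i, one has d₀(W_{n+k}, α_{n+k}) = 1/6 + 1/(2·3ⁿ). -/
open Filter

/-- mismatch count: positions where first word has 0 and second has 1 -/
def mis (u v : List (Fin 2)) : ℕ := (u.zip v).countP (fun q => decide (q.1 = 0 ∧ q.2 = 1))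

lemma mis_append {u₁ v₁ : List (Fin 2)} (u₂ v₂ : List (Fin 2)) (h : u₁.length = v₁.length) :
    mis (u₁ ++ u₂) (v₁ ++ v₂) = mis u₁ v₁ + mis u₂ v₂ := by
  unfold mis; rw [List.zip_append h, List.countP_append]

lemma mis_self (u : List (Fin 2)) : mis u u = 0 := by
  induction u with
  | nil => rfl
  | cons a t ih =>
      unfold mis at *
      simp only [List.zip_cons_cons, List.countP_cons, ih]
      have : ¬ (a = 0 ∧ a = 1) := by rintro ⟨h1, h2⟩; rw [h1] at h2; exact absurd h2 (by decide)
      simp [this]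

lemma mis_one (v : List (Fin 2)) : mis [1] v = 0 := by
  cases v with
  | nil => rfl
  | cons b t => simp [mis, List.countP_cons]

lemma mis_cons_zero_one (x : Fin 2) : mis [x] [1] = if x = 0 then 1 else 0 := by
  fin_cases x <;> simp [mis, List.countP_cons] <;> rfl

-- bridge: Finset filter card = countP
lemma countAux {γ : Type} (l : List γ) (d : γ) (p : γ → Prop) [DecidablePred p] :
    ((Finset.range l.length).filter fun i => p (l.getD i d)).card
      = l.countP (fun x => decide (p x)) := by
  induction l using List.reverseRecOn with
  | nil => simp
  | append_singleton l a ih =>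
      have hcong : (Finset.range l.length).filter (fun i => p ((l ++ [a]).getD i d))
          = (Finset.range l.length).filter (fun i => p (l.getD i d)) := by
        apply Finset.filter_congr
        intro i hi
        have hi' : i < l.length := Finset.mem_range.mp hi
        rw [List.getD_append _ _ _ _ hi']
      have hlast : (l ++ [a]).getD l.length d = a := by
        rw [List.getD_append_right _ _ _ _ (le_refl _)]
        simp
      rw [List.length_append, List.length_singleton, Finset.range_add_one, Finset.filter_insert,
        List.countP_append]
      by_cases hp : p a
      · rw [if_pos (by rwa [hlast]), Finset.card_insert_of_notMem (by simp), hcong, ih]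
        simp [List.countP_singleton, hp]
      · rw [if_neg (by rwa [hlast]), hcong, ih]
        simp [List.countP_singleton, hp]

lemma bridge_num (α β : List (Fin 2)) (h : α.length = β.length) :
    ((Finset.range α.length).filter fun i => α.getD i 0 = 0 ∧ β.getD i 0 = 1).card = mis α β := by
  have hlen : (α.zip β).length = α.length := by simp [h]
  have := countAux (α.zip β) (0, 0) (fun q => q.1 = 0 ∧ q.2 = 1)
  rw [hlen] at this
  unfold mis
  rw [← this]
  congr 1
  apply Finset.filter_congr
  intro i hi
  have hi1 : i < α.length := Finset.mem_range.mp hi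
  have hi2 : i < β.length := h ▸ hi1
  have hiz : i < (α.zip β).length := by simp [h]; omega
  rw [List.getD_eq_getElem α 0 hi1, List.getD_eq_getElem β 0 hi2,
    List.getD_eq_getElem _ _ hiz, List.getElem_zip]

lemma bridge_den (α : List (Fin 2)) :
    ((Finset.range α.length).filter fun i => α.getD i 0 = 0).card
      = α.countP (fun x => decide (x = 0)) :=
  countAux α 0 (fun x => x = 0)

-- chacon basics
lemma chacon_succ (p : ℕ) :
    chaconWord (p+1) = chaconWord p ++ chaconWord p ++ [1] ++ chaconWord p := rfl

lemma chacon_len (p : ℕ) : 2 * (chaconWord p).length + 1 = 3 ^ (p+1) := by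
  induction p with
  | zero => rfl
  | succ q ih =>
      rw [chacon_succ]
      simp only [List.length_append, List.length_singleton]
      rw [pow_succ 3 (q+1), ← ih]; ring

lemma chacon_count0 (p : ℕ) : (chaconWord p).countP (fun x => decide (x = 0)) = 3 ^ p := by
  induction p with
  | zero => rfl
  | succ q ih =>
      rw [chacon_succ]
      simp only [List.countP_append, ih]
      rw [pow_succ]
      simp [List.countP_singleton]
      ring

lemma chacon_head' (p : ℕ) : ∃ t, chaconWord p = 0 :: t := by
  induction p with
  | zero => exact ⟨[], rfl⟩
  | succ q ih =>
      obtain ⟨t, ht⟩ := ih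
      exact ⟨t ++ chaconWord q ++ [1] ++ chaconWord q, by rw [chacon_succ]; rw [ht]; simp⟩

lemma chacon_head (p : ℕ) : chaconWord p = 0 :: (chaconWord p).drop 1 := by
  obtain ⟨t, ht⟩ := chacon_head' p
  rw [ht]; simp

lemma chacon_last' (p : ℕ) : ∃ t, chaconWord p = t ++ [0] := by
  induction p with
  | zero => exact ⟨[], rfl⟩
  | succ q ih =>
      obtain ⟨t, ht⟩ := ih
      refine ⟨chaconWord q ++ chaconWord q ++ [1] ++ t, ?_⟩
      rw [chacon_succ]
      conv_rhs => rw [List.append_assoc, ← ht]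

lemma chacon_last (p : ℕ) :
    chaconWord p = (chaconWord p).take ((chaconWord p).length - 1) ++ [0] := by
  obtain ⟨t, ht⟩ := chacon_last' p
  have hl : (chaconWord p).length - 1 = t.length := by rw [ht]; simp
  rw [hl]
  conv_lhs => rw [ht]
  rw [ht, List.take_left]

-- ### H and K quantities
def Hm (p : ℕ) : ℕ := mis (chaconWord p) ((chaconWord p).drop 1 ++ [1])

def Km (p : ℕ) : ℕ :=
  mis (chaconWord p) (1 :: (chaconWord p).take ((chaconWord p).length - 1))

lemma mis01 : mis [(0 : Fin 2)] [1] = 1 := by decide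
lemma mis00 : mis [(0 : Fin 2)] [0] = 0 := by decide
lemma mis10 : mis [(1 : Fin 2)] [0] = 0 := by decide

lemma mis_cons (a b : Fin 2) (u v : List (Fin 2)) :
    mis (a :: u) (b :: v) = mis u v + (if a = 0 ∧ b = 1 then 1 else 0) := by
  unfold mis
  rw [List.zip_cons_cons, List.countP_cons]
  congr 1
  by_cases h : a = 0 ∧ b = 1 <;> simp [h]

lemma Hm_succ (p : ℕ) : Hm (p + 1) + 1 = 3 * Hm p := by
  obtain ⟨tA, hhead⟩ := chacon_head' p
  obtain ⟨T, hlast⟩ := chacon_last' p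
  have hlen1 : (chaconWord p).length = tA.length + 1 := by rw [hhead]; simp
  have hlen2 : (chaconWord p).length = T.length + 1 := by rw [hlast]; simp
  have hdrop1 : (chaconWord p).drop 1 = tA := by rw [hhead]; simp
  have hHp : Hm p = mis (chaconWord p) (tA ++ [1]) := by rw [Hm, hdrop1]
  have hHp' : Hm p = mis T tA + 1 := by
    rw [hHp, hlast, mis_append _ _ (by omega), mis01]
  have hHp'' : mis (chaconWord p) (tA ++ [0]) = mis T tA := by
    rw [hlast, mis_append _ _ (by omega), mis00]
    omega
  have e : chaconWord (p + 1) = 0 :: (tA ++ (chaconWord p ++ ([1] ++ chaconWord p))) := by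
    rw [chacon_succ]
    nth_rewrite 1 [hhead]
    simp
  have hdropw : (chaconWord (p+1)).drop 1 ++ [1]
      = (tA ++ [0]) ++ ((tA ++ [1]) ++ ([(0:Fin 2)] ++ (tA ++ [1]))) := by
    rw [e, hhead]
    simp
  have hword : chaconWord (p+1) = chaconWord p ++ (chaconWord p ++ ([1] ++ chaconWord p)) := by
    rw [chacon_succ]; simp [List.append_assoc]
  have h1 : Hm (p+1)
      = mis (chaconWord p) (tA ++ [0]) + (mis (chaconWord p) (tA ++ [1])
        + (mis [1] [0] + mis (chaconWord p) (tA ++ [1]))) := by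
    rw [Hm, hdropw]
    conv_lhs => rw [hword]
    rw [mis_append _ _ (by simp; omega), mis_append _ _ (by simp; omega),
      mis_append _ _ (by simp)]
  rw [h1, mis10, hHp'', ← hHp]
  omega

lemma Km_succ (p : ℕ) : Km (p + 1) + 1 = 3 * Km p := by
  obtain ⟨tA, hhead⟩ := chacon_head' p
  obtain ⟨T, hlast⟩ := chacon_last' p
  have hlen1 : (chaconWord p).length = tA.length + 1 := by rw [hhead]; simp
  have hlen2 : (chaconWord p).length = T.length + 1 := by rw [hlast]; simp
  have htakeT : (chaconWord p).take ((chaconWord p).length - 1) = T := by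
    rw [hlast]; simp
  have hKp : Km p = mis (chaconWord p) (1 :: T) := by rw [Km, htakeT]
  have hKp' : Km p = mis tA T + 1 := by
    rw [hKp, hhead, mis_cons]; simp
  have hKp'' : mis (chaconWord p) ((0:Fin 2) :: T) = mis tA T := by
    rw [hhead, mis_cons]; simp
  have hlen' : (chaconWord (p+1)).length - 1
      = (chaconWord p ++ chaconWord p ++ [1]).length + ((chaconWord p).length - 1) := by
    rw [chacon_succ]; simp; omega
  have htake : (chaconWord (p+1)).take ((chaconWord (p+1)).length - 1)
      = (chaconWord p ++ chaconWord p ++ [1]) ++ T := by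
    rw [hlen', chacon_succ]
    rw [show chaconWord p ++ chaconWord p ++ [1] ++ chaconWord p
        = (chaconWord p ++ chaconWord p ++ [1]) ++ chaconWord p from by
      simp [List.append_assoc]]
    rw [List.take_append, List.take_of_length_le (by omega)]
    congr 1
    rw [Nat.add_sub_cancel_left]
    exact htakeT
  have hword : chaconWord (p+1) = chaconWord p ++ (chaconWord p ++ ([1] ++ chaconWord p)) := by
    rw [chacon_succ]; simp [List.append_assoc]
  have hcmp : (1:Fin 2) :: (chaconWord (p+1)).take ((chaconWord (p+1)).length - 1)
      = ([1] ++ T) ++ (([0] ++ T) ++ ([(0:Fin 2)] ++ ([1] ++ T))) := by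
    rw [htake, hlast]
    simp
  have h1 : Km (p+1)
      = mis (chaconWord p) ([1] ++ T) + (mis (chaconWord p) ([0] ++ T)
        + (mis [1] [0] + mis (chaconWord p) ([1] ++ T))) := by
    rw [Km, hcmp]
    conv_lhs => rw [hword]
    rw [mis_append _ _ (by simp; omega), mis_append _ _ (by simp; omega),
      mis_append _ _ (by simp)]
  have hKp3 : mis (chaconWord p) ([0] ++ T) = mis tA T := hKp''
  rw [h1, mis10, hKp3, show mis (chaconWord p) ([1] ++ T) = Km p from hKp.symm]
  omega

lemma Hm_zero : Hm 0 = 1 := by decide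
lemma Km_zero : Km 0 = 1 := by decide

lemma Km_eq_Hm (p : ℕ) : Km p = Hm p := by
  induction p with
  | zero => rw [Hm_zero, Km_zero]
  | succ q ih =>
      have h1 := Hm_succ q
      have h2 := Km_succ q
      omega

lemma two_Hm (p : ℕ) : 2 * Hm p = 3 ^ p + 1 := by
  induction p with
  | zero => rw [Hm_zero]; norm_num
  | succ q ih =>
      have h1 := Hm_succ q
      have h3 : (3:ℕ) ^ (q+1) = 3 * 3 ^ q := by rw [pow_succ]; ring
      omega

-- ### rotation words
def rotW (i p : ℕ) : List (Fin 2) := (chaconWord p).drop i ++ (chaconWord p).take i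

def gW (i p : ℕ) : List (Fin 2) := (chaconWord p).drop i ++ 1 :: (chaconWord p).take (i - 1)

lemma E1 (A ta da t'a : List (Fin 2)) (x : Fin 2)
    (h1 : ta ++ da = A) (h2 : t'a ++ [x] = ta) :
    (da ++ (A ++ ([1] ++ A))) ++ ta
      = (da ++ ta) ++ ((da ++ 1 :: t'a) ++ ([x] ++ (da ++ ta))) := by
  subst h1
  rw [← h2]
  simp

lemma E2 (A ta da t'a : List (Fin 2)) (x : Fin 2)
    (h1 : ta ++ da = A) (h2 : t'a ++ [x] = ta) :
    (da ++ (A ++ ([1] ++ A))) ++ 1 :: t'a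
      = (da ++ ta) ++ ((da ++ 1 :: t'a) ++ ([x] ++ (da ++ 1 :: t'a))) := by
  subst h1
  rw [← h2]
  simp

lemma base_F (p : ℕ) :
    mis (chaconWord (p+1)) (rotW (2 * (chaconWord p).length + 1) (p+1)) = Hm p := by
  obtain ⟨tB, hhead⟩ := chacon_head' p
  have hdrop1 : (chaconWord p).drop 1 = tB := by rw [hhead]; simp
  set i := 2 * (chaconWord p).length + 1 with hi
  have hXlen : i = (chaconWord p ++ chaconWord p ++ [1]).length := by simp [hi]; omega
  have hsucc : chaconWord (p+1) = (chaconWord p ++ chaconWord p ++ [1]) ++ chaconWord p := by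
    rw [chacon_succ]
  have hdrop : (chaconWord (p+1)).drop i = chaconWord p := by
    rw [hsucc, hXlen, List.drop_left]
  have htake : (chaconWord (p+1)).take i = chaconWord p ++ chaconWord p ++ [1] := by
    rw [hsucc, hXlen, List.take_left]
  have hrot : rotW i (p+1)
      = chaconWord p ++ (chaconWord p ++ ([(0:Fin 2)] ++ (tB ++ [1]))) := by
    simp only [rotW]
    rw [hdrop, htake, hhead]
    simp
  have hword : chaconWord (p+1)
      = chaconWord p ++ (chaconWord p ++ ([1] ++ chaconWord p)) := by
    rw [chacon_succ]; simp
  have h1 : mis (chaconWord (p+1)) (rotW i (p+1))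
      = mis (chaconWord p) (chaconWord p) + (mis (chaconWord p) (chaconWord p)
        + (mis [1] [0] + mis (chaconWord p) (tB ++ [1]))) := by
    rw [hrot]
    conv_lhs => rw [hword]
    rw [mis_append _ _ rfl, mis_append _ _ rfl, mis_append _ _ (by simp)]
  rw [h1, mis_self, mis10, show mis (chaconWord p) (tB ++ [1]) = Hm p from by
    rw [Hm, hdrop1]]
  omega

lemma base_G (p : ℕ) :
    mis (chaconWord (p+1)) (gW (2 * (chaconWord p).length + 1) (p+1)) = Hm p := by
  obtain ⟨T, hlast⟩ := chacon_last' p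
  have htakeT : (chaconWord p).take ((chaconWord p).length - 1) = T := by
    rw [hlast]; simp
  set i := 2 * (chaconWord p).length + 1 with hi
  have hXlen : i = (chaconWord p ++ chaconWord p ++ [1]).length := by simp [hi]; omega
  have hsucc : chaconWord (p+1) = (chaconWord p ++ chaconWord p ++ [1]) ++ chaconWord p := by
    rw [chacon_succ]
  have hdrop : (chaconWord (p+1)).drop i = chaconWord p := by
    rw [hsucc, hXlen, List.drop_left]
  have hYlen : i - 1 = (chaconWord p ++ chaconWord p).length := by simp [hi]; omega
  have hsucc2 : chaconWord (p+1) = (chaconWord p ++ chaconWord p) ++ ([1] ++ chaconWord p) := by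
    rw [chacon_succ]; simp
  have htake2 : (chaconWord (p+1)).take (i - 1) = chaconWord p ++ chaconWord p := by
    rw [hsucc2, hYlen, List.take_left]
  have hg : gW i (p+1)
      = chaconWord p ++ (([1] ++ T) ++ ([(0:Fin 2)] ++ chaconWord p)) := by
    simp only [gW]
    rw [hdrop, htake2, hlast]
    simp
  have hword : chaconWord (p+1)
      = chaconWord p ++ (chaconWord p ++ ([1] ++ chaconWord p)) := by
    rw [chacon_succ]; simp
  have h1 : mis (chaconWord (p+1)) (gW i (p+1))
      = mis (chaconWord p) (chaconWord p) + (mis (chaconWord p) ([1] ++ T)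
        + (mis [1] [0] + mis (chaconWord p) (chaconWord p))) := by
    rw [hg]
    conv_lhs => rw [hword]
    rw [mis_append _ _ rfl, mis_append _ _ (by simp [hlast]), mis_append _ _ (by simp)]
  rw [h1, mis_self, mis10, show mis (chaconWord p) ([1] ++ T) = Km p from by
    rw [Km, htakeT]; rfl]
  rw [Km_eq_Hm]
  omega

lemma i_le_len (n m : ℕ) (h : n + 1 ≤ m) :
    2 * (chaconWord n).length + 1 ≤ (chaconWord m).length := by
  have h1 := chacon_len n
  have h2 := chacon_len m
  have h3 : (3:ℕ) ^ (n+2) ≤ 3 ^ (m+1) := Nat.pow_le_pow_right (by norm_num) (by omega)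
  have h4 : (3:ℕ) ^ (n+2) = 3 * 3 ^ (n+1) := by rw [pow_succ]; ring
  omega

lemma main_ind (n k : ℕ) :
    mis (chaconWord (n+1+k)) (rotW (2 * (chaconWord n).length + 1) (n+1+k)) = 3 ^ k * Hm n ∧
    mis (chaconWord (n+1+k)) (gW (2 * (chaconWord n).length + 1) (n+1+k)) = 3 ^ k * Hm n := by
  induction k with
  | zero => simpa using ⟨base_F n, base_G n⟩
  | succ j ih =>
      obtain ⟨ihF, ihG⟩ := ih
      set i := 2 * (chaconWord n).length + 1 with hi
      have hm : n + 1 + (j + 1) = (n + 1 + j) + 1 := by omega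
      rw [hm]
      set m := n + 1 + j with hmdef
      have hiL : i ≤ (chaconWord m).length := i_le_len n m (by omega)
      have hi1 : 1 ≤ i := by omega
      have hlt : i - 1 < (chaconWord m).length := by omega
      set x := (chaconWord m).getD (i-1) 0 with hx
      have hxe : (chaconWord m).take (i-1) ++ [x] = (chaconWord m).take i := by
        rw [hx, List.getD_eq_getElem _ _ hlt]
        conv_rhs => rw [show i = i - 1 + 1 from by omega]
        rw [List.take_succ, List.getElem?_eq_getElem hlt]
        simp
      have hCm1 : chaconWord (m+1)
          = chaconWord m ++ (chaconWord m ++ ([1] ++ chaconWord m)) := by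
        rw [chacon_succ]; simp
      have hdrop : (chaconWord (m+1)).drop i
          = (chaconWord m).drop i ++ (chaconWord m ++ ([1] ++ chaconWord m)) := by
        rw [hCm1, List.drop_append,
          show i - (chaconWord m).length = 0 from by omega, List.drop_zero]
      have htake : (chaconWord (m+1)).take i = (chaconWord m).take i := by
        rw [hCm1, List.take_append,
          show i - (chaconWord m).length = 0 from by omega, List.take_zero, List.append_nil]
      have htake' : (chaconWord (m+1)).take (i-1) = (chaconWord m).take (i-1) := by
        rw [hCm1, List.take_append,
          show i - 1 - (chaconWord m).length = 0 from by omega, List.take_zero, List.append_nil]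
      have hlenR : (chaconWord m).length = (rotW i m).length := by
        simp [rotW]; omega
      have hlenG : (chaconWord m).length = (gW i m).length := by
        simp [gW]; omega
      have hrotE : rotW i (m+1) = rotW i m ++ (gW i m ++ ([x] ++ rotW i m)) := by
        simp only [rotW, gW]
        rw [hdrop, htake]
        exact E1 _ _ _ _ _ (List.take_append_drop i (chaconWord m)) hxe
      have hgE : gW i (m+1) = rotW i m ++ (gW i m ++ ([x] ++ gW i m)) := by
        simp only [rotW, gW]
        rw [hdrop, htake']
        exact E2 _ _ _ _ _ (List.take_append_drop i (chaconWord m)) hxe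
      have hF : mis (chaconWord (m+1)) (rotW i (m+1))
          = mis (chaconWord m) (rotW i m) + (mis (chaconWord m) (gW i m)
            + (mis [1] [x] + mis (chaconWord m) (rotW i m))) := by
        rw [hrotE]
        conv_lhs => rw [hCm1]
        rw [mis_append _ _ hlenR, mis_append _ _ hlenG, mis_append _ _ (by simp)]
      have hG : mis (chaconWord (m+1)) (gW i (m+1))
          = mis (chaconWord m) (rotW i m) + (mis (chaconWord m) (gW i m)
            + (mis [1] [x] + mis (chaconWord m) (gW i m))) := by
        rw [hgE]
        conv_lhs => rw [hCm1]
        rw [mis_append _ _ hlenR, mis_append _ _ hlenG, mis_append _ _ (by simp)]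
      have hpow : (3:ℕ) ^ (j+1) = 3 * 3 ^ j := by rw [pow_succ]; ring
      constructor
      · rw [hF, mis_one, ihF, ihG, hpow]; ring
      · rw [hG, mis_one, ihF, ihG, hpow]; ring

lemma subword_eq_rot (W : ℕ → Fin 2) (hW : IsChaconInfWord W) (n k : ℕ) :
    subword W (2 * (chaconWord n).length + 1) (chaconWord (n+1+k)).length
      = rotW (2 * (chaconWord n).length + 1) (n+1+k) := by
  set i := 2 * (chaconWord n).length + 1 with hi
  set m := n + 1 + k with hm
  set L := (chaconWord m).length with hL
  have hiL : i ≤ L := i_le_len n m (by omega)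
  have hlen1 : (chaconWord (m+1)).length = 3 * L + 1 := by
    rw [chacon_succ]; simp [hL]; omega
  have step1 : subword W i L = ((chaconWord (m+1)).drop i).take L := by
    apply List.ext_getElem
    · simp [subword, hlen1]
      omega
    · intro j h1 h2
      have hj : j < L := by simpa [subword] using h1
      have hb : i + j < (chaconWord (m+1)).length := by omega
      simp only [subword, List.getElem_map, List.getElem_range, List.getElem_take,
        List.getElem_drop]
      rw [hW (m+1) (i+j) hb, List.getD_eq_getElem _ _ hb]
  have hdrop : (chaconWord (m+1)).drop i
      = (chaconWord m).drop i ++ (chaconWord m ++ ([1] ++ chaconWord m)) := by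
    rw [show chaconWord (m+1) = chaconWord m ++ (chaconWord m ++ ([1] ++ chaconWord m)) from by
      rw [chacon_succ]; simp]
    rw [List.drop_append,
      show i - (chaconWord m).length = 0 from by omega, List.drop_zero]
  have step2 : ((chaconWord (m+1)).drop i).take L = rotW i m := by
    rw [hdrop, List.take_append]
    have hld : ((chaconWord m).drop i).length = L - i := by simp [hL]
    rw [List.take_of_length_le (by omega), hld,
      show L - (L - i) = i from by omega,
      List.take_append,
      show i - (chaconWord m).length = 0 from by omega, List.take_zero, List.append_nil]
    rfl
  rw [step1, step2]

theorem chacon_special_shift_hamming0 (W : ℕ → Fin 2) (hW : IsChaconInfWord W) (n : ℕ)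
    (hn : 0 < n) (k : ℕ) :
    hamming0 (chaconWord (n + k))
        (subword W (2 * (chaconWord (n - 1)).length + 1) (chaconWord (n + k)).length) =
      1 / 6 + 1 / (2 * 3 ^ n) := by
  obtain ⟨p, rfl⟩ : ∃ p, n = p + 1 := ⟨n - 1, by omega⟩
  rw [show p + 1 - 1 = p from by omega]
  set i := 2 * (chaconWord p).length + 1 with hi
  have hplus : p + 1 + k = p + 1 + k := rfl
  have hsub : subword W i (chaconWord (p + 1 + k)).length = rotW i (p + 1 + k) :=
    subword_eq_rot W hW p k
  have hiL : i ≤ (chaconWord (p + 1 + k)).length := i_le_len p _ (by omega)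
  have hlenrot : (chaconWord (p + 1 + k)).length = (rotW i (p + 1 + k)).length := by
    simp [rotW]; omega
  unfold hamming0
  rw [hsub, bridge_num _ _ hlenrot, bridge_den, (main_ind p k).1, chacon_count0]
  have h2 : (2 : ℝ) * (Hm p : ℝ) = 3 ^ p + 1 := by
    exact_mod_cast two_Hm p
  have hpow : (3 : ℝ) ^ (p + 1 + k) = 3 ^ p * 3 * 3 ^ k := by
    rw [pow_add, pow_add, pow_one]
  have hpow2 : (3 : ℝ) ^ (p + 1) = 3 ^ p * 3 := by rw [pow_add, pow_one]
  push_cast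
  rw [hpow, hpow2]
  have h3 : (3 : ℝ) ^ p > 0 := by positivity
  have h4 : (3 : ℝ) ^ k > 0 := by positivity
  field_simp
  nlinarith [h2, h3, h4, mul_pos h3 h4]
end
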